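/- A bipartite graph G with vertex parts X = {x_1,…,x_m} and Y = {y_1,…,y_n} and no isolated vertices is edgewise strongly shellable if and only if, after suitable reordering of X and Y, it is a Ferrers graph: whenever {x_i, y_j} ∈ E(G), also {x_r, y_s} ∈ E(G) for all 1 ≤ r ≤ i and 1 ≤ s ≤ j. -/

import Mathlib

open scoped Classical

def StronglyShellable {α : Type*} [DecidableEq α] (F : Finset (Finset α)) : Prop :=
  ∃ l : List (Finset α), l.Nodup ∧ l.toFinset = F ∧
    ∀ i j : Fin l.length, (i : ℕ) < (j : ℕ) →
      ∃ k : Fin l.length, (k : ℕ) < (j : ℕ) ∧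
        (l.get j \ l.get k).card = 1 ∧
        l.get i ∩ l.get j ⊆ l.get k ∧ l.get k ⊆ l.get i ∪ l.get j

def edgeSets {V : Type*} [Fintype V] [DecidableEq V] (G : SimpleGraph V) [DecidableRel G.Adj] :
    Finset (Finset V) :=
  G.edgeFinset.image (Sym2.lift ⟨fun u v => ({u, v} : Finset V), fun u v => Finset.pair_comm u v⟩)


/-!
In a shelling, when two disjoint edges `ab`, `cd` both occur, the later one needs an earlier
edge inside `{a, b, c, d}` meeting it in exactly one vertex; in a bipartite graph this is a cross
edge `ad` or `cb`. So the biadjacency relation is a Ferrers relation, the neighbourhoods on each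
side form chains, and sorting both sides by decreasing degree gives a Ferrers ordering.
Conversely, the edges of a Ferrers graph listed lexicographically form a shelling: for a later
edge `xᵢyⱼ` and an earlier `xᵣyₛ` with `r < i`, the edge `xᵣyⱼ` is present, comes earlier and
does the job; when `r = i`, `xᵣyₛ` itself does.
-/

open Finset

section StronglyShellable

variable {α : Type*} [DecidableEq α]

theorem StronglyShellable.exists_between {F : Finset (Finset α)} (hF : StronglyShellable F)
    {e f : Finset α} (he : e ∈ F) (hf : f ∈ F) (hne : e ≠ f) :
    ∃ g ∈ F, e ∩ f ⊆ g ∧ g ⊆ e ∪ f ∧ ((e \ g).card = 1 ∨ (f \ g).card = 1) := by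
  obtain ⟨l, -, rfl, hl⟩ := hF
  obtain ⟨i, rfl⟩ := List.mem_iff_get.mp (List.mem_toFinset.mp he)
  obtain ⟨j, rfl⟩ := List.mem_iff_get.mp (List.mem_toFinset.mp hf)
  have hij : (i : ℕ) ≠ j := fun h => hne (congrArg l.get (Fin.ext h))
  rcases hij.lt_or_gt with hij | hji
  · obtain ⟨k, -, hcard, hinter, hunion⟩ := hl i j hij
    exact ⟨l.get k, List.mem_toFinset.mpr (l.get_mem k), hinter, hunion, .inr hcard⟩
  · obtain ⟨k, -, hcard, hinter, hunion⟩ := hl j i hji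
    exact ⟨l.get k, List.mem_toFinset.mpr (l.get_mem k), inter_comm (l.get i) _ ▸ hinter,
      union_comm (l.get i) _ ▸ hunion, .inl hcard⟩

theorem stronglyShellable_image_of_linearOrder {ι : Type*} [LinearOrder ι] (S : Finset ι)
    {f : ι → Finset α} (hf : Set.InjOn f S)
    (h : ∀ p ∈ S, ∀ q ∈ S, p < q → ∃ r ∈ S, r < q ∧
      (f q \ f r).card = 1 ∧ f p ∩ f q ⊆ f r ∧ f r ⊆ f p ∪ f q) :
    StronglyShellable (S.image f) := by
  have hmem (x : ι) : x ∈ S.sort ↔ x ∈ S := S.mem_sort (· ≤ ·)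
  have hsort : StrictMono S.sort.get := S.sortedLT_sort.strictMono_get
  refine ⟨S.sort.map f, (S.sort_nodup (· ≤ ·)).map_on fun p hp q hq =>
    hf ((hmem p).mp hp) ((hmem q).mp hq), by ext; simp, fun i j hij => ?_⟩
  let i' : Fin S.sort.length := i.cast (List.length_map _)
  let j' : Fin S.sort.length := j.cast (List.length_map _)
  obtain ⟨r, hr, hrj, hcard, hinter, hunion⟩ :=
    h _ ((hmem _).mp (List.get_mem _ i')) _ ((hmem _).mp (List.get_mem _ j'))
      (hsort (show i' < j' from hij))
  obtain ⟨k, rfl⟩ := List.mem_iff_get.mp ((hmem r).mpr hr)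
  refine ⟨k.cast (List.length_map _).symm, hsort.lt_iff_lt.mp hrj, ?_⟩
  simpa using ⟨hcard, hinter, hunion⟩

end StronglyShellable

section BiEdge

variable {α β : Type*} [DecidableEq α] [DecidableEq β]

def biEdge (p : α × β) : Finset (α ⊕ β) := {Sum.inl p.1, Sum.inr p.2}

@[simp]
theorem mem_biEdge {p : α × β} {x : α ⊕ β} : x ∈ biEdge p ↔ x = .inl p.1 ∨ x = .inr p.2 := by
  simp [biEdge]

theorem biEdge_injective : Function.Injective (biEdge : α × β → Finset (α ⊕ β)) := by
  intro p q h
  have h1 : Sum.inl p.1 ∈ biEdge q := h ▸ mem_biEdge.mpr (.inl rfl)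
  have h2 : Sum.inr p.2 ∈ biEdge q := h ▸ mem_biEdge.mpr (.inr rfl)
  simp only [mem_biEdge, Sum.inl.injEq, Sum.inr.injEq, reduceCtorEq, or_false, false_or] at h1 h2
  exact Prod.ext h1 h2

theorem biEdge_sdiff_biEdge (p q : α × β) :
    biEdge p \ biEdge q =
      (if p.1 = q.1 then ∅ else {Sum.inl p.1}) ∪ (if p.2 = q.2 then ∅ else {Sum.inr p.2}) := by
  ext x
  by_cases h1 : p.1 = q.1 <;> by_cases h2 : p.2 = q.2 <;> simp [h1, h2] <;> grind

theorem card_biEdge_sdiff (p q : α × β) :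
    (biEdge p \ biEdge q).card = (if p.1 = q.1 then 0 else 1) + (if p.2 = q.2 then 0 else 1) := by
  by_cases h1 : p.1 = q.1 <;> by_cases h2 : p.2 = q.2 <;> simp [biEdge_sdiff_biEdge, h1, h2]

theorem biEdge_subset_union_iff {p q r : α × β} :
    biEdge r ⊆ biEdge p ∪ biEdge q ↔ (r.1 = p.1 ∨ r.1 = q.1) ∧ (r.2 = p.2 ∨ r.2 = q.2) := by
  simp [biEdge, insert_subset_iff, or_comm]

theorem inter_biEdge_subset_iff {p q r : α × β} :
    biEdge p ∩ biEdge q ⊆ biEdge r ↔ (p.1 = q.1 → r.1 = p.1) ∧ (p.2 = q.2 → r.2 = p.2) := by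
  simp only [subset_iff, mem_inter, mem_biEdge, and_imp, forall_eq_or_imp, Sum.inl.injEq,
    reduceCtorEq, or_false, forall_eq, Sum.inr.injEq, false_or]
  grind

end BiEdge

section FerrersRel

variable {α β : Type*}

/-- Riguet's Ferrers relations (biorders), i.e. the biadjacency relations of bipartite graphs
without an induced `2K₂`. -/
def IsFerrersRel (R : α → β → Prop) : Prop :=
  ∀ ⦃a c : α⦄ ⦃b d : β⦄, R a b → R c d → R a d ∨ R c b

theorem IsFerrersRel.flip {R : α → β → Prop} (h : IsFerrersRel R) : IsFerrersRel (flip R) :=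
  fun _ _ _ _ hab hcd => (h hab hcd).symm

theorem IsFerrersRel.filter_total [Fintype β] {R : α → β → Prop} (h : IsFerrersRel R) (a c : α) :
    univ.filter (R a) ⊆ univ.filter (R c) ∨ univ.filter (R c) ⊆ univ.filter (R a) := by
  by_contra! hne
  obtain ⟨b, hab, hcb⟩ := not_subset.mp hne.1
  obtain ⟨d, hcd, had⟩ := not_subset.mp hne.2
  simp only [mem_filter_univ] at hab hcb hcd had
  exact (h hab hcd).elim had hcb

theorem exists_perm_antitone_of_total {n : ℕ} {N : Fin n → Finset β}
    (h : ∀ a c, N a ⊆ N c ∨ N c ⊆ N a) : ∃ σ : Equiv.Perm (Fin n), Antitone (N ∘ σ) := by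
  let key : Fin n → ℕᵒᵈ := fun a => OrderDual.toDual (N a).card
  refine ⟨Tuple.sort key, fun i j hij => ?_⟩
  have hcard : (N (Tuple.sort key j)).card ≤ (N (Tuple.sort key i)).card :=
    Tuple.monotone_sort key hij
  rcases h (Tuple.sort key j) (Tuple.sort key i) with hji | hij
  · exact hji
  · exact (eq_of_subset_of_card_le hij hcard).ge

theorem IsFerrersRel.exists_perm {m n : ℕ} {R : Fin m → Fin n → Prop} (h : IsFerrersRel R) :
    ∃ (σ : Equiv.Perm (Fin m)) (τ : Equiv.Perm (Fin n)),
      ∀ (i r : Fin m) (j s : Fin n), R (σ i) (τ j) → r ≤ i → s ≤ j → R (σ r) (τ s) := by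
  obtain ⟨σ, hσ⟩ := exists_perm_antitone_of_total h.filter_total
  obtain ⟨τ, hτ⟩ := exists_perm_antitone_of_total h.flip.filter_total
  refine ⟨σ, τ, fun i r j s hij hri hsj => ?_⟩
  have hrj : R (σ r) (τ j) := (mem_filter_univ _).mp (hσ hri ((mem_filter_univ _).mpr hij))
  exact (mem_filter_univ (σ r)).mp (hτ hsj ((mem_filter_univ _).mpr hrj))

end FerrersRel

section BiEdges

variable {α β : Type*} [DecidableEq α] [DecidableEq β] [Fintype α] [Fintype β]

noncomputable def biEdges (R : α → β → Prop) : Finset (Finset (α ⊕ β)) :=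
  (univ.filter fun p : α × β => R p.1 p.2).image biEdge

theorem biEdge_mem_biEdges {R : α → β → Prop} {p : α × β} :
    biEdge p ∈ biEdges R ↔ R p.1 p.2 := by
  simp [biEdges, biEdge_injective.eq_iff]

theorem IsFerrersRel.of_stronglyShellable {R : α → β → Prop}
    (h : StronglyShellable (biEdges R)) : IsFerrersRel R := by
  intro a c b d hab hcd
  by_cases hac : a = c
  · exact .inl (by rwa [hac])
  by_cases hbd : b = d
  · exact .inr (by rwa [hbd])
  obtain ⟨g, hg, -, hunion, hcard⟩ := h.exists_between (biEdge_mem_biEdges.mpr hab)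
    (biEdge_mem_biEdges.mpr hcd) (biEdge_injective.ne fun h => hac (congrArg Prod.fst h :
      (a, b).1 = (c, d).1))
  obtain ⟨⟨x, y⟩, hxy, rfl⟩ := mem_image.mp hg
  rw [biEdge_subset_union_iff] at hunion
  -- `g` is one of the four pairs; the cardinality condition rules out `ab` and `cd`.
  obtain ⟨rfl | rfl, rfl | rfl⟩ := hunion <;>
    simp_all [card_biEdge_sdiff, Ne.symm hac, Ne.symm hbd]

theorem stronglyShellable_biEdges {γ δ : Type*} [LinearOrder γ] [LinearOrder δ] [Fintype γ]
    [Fintype δ] (σ : γ ≃ α) (τ : δ ≃ β) {R : α → β → Prop}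
    (hR : ∀ (i r : γ) (j s : δ), R (σ i) (τ j) → r ≤ i → s ≤ j → R (σ r) (τ s)) :
    StronglyShellable (biEdges R) := by
  let e : Lex (γ × δ) → α × β := fun p => (σ (ofLex p).1, τ (ofLex p).2)
  have he : e.Bijective := (σ.prodCongr τ).bijective.comp ofLex.bijective
  have himage : biEdges R = (univ.filter fun p => R (e p).1 (e p).2).image (biEdge ∘ e) := by
    rw [← image_image, ← filter_image (p := fun x : α × β => R x.1 x.2),
      image_univ_of_surjective he.2, biEdges]
  rw [himage]
  refine stronglyShellable_image_of_linearOrder _ (biEdge_injective.comp he.1).injOn ?_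
  intro p hp q hq hpq
  rw [mem_filter_univ] at hp hq
  rcases (Prod.Lex.toLex_lt_toLex (x := ofLex p) (y := ofLex q)).mp hpq with hlt | ⟨heq, hlt⟩
  · refine ⟨toLex ((ofLex p).1, (ofLex q).2), (mem_filter_univ _).mpr (hR _ _ _ _ hq hlt.le le_rfl),
      Prod.Lex.toLex_lt_toLex.mpr (.inl hlt), ?_⟩
    simpa [e, card_biEdge_sdiff, inter_biEdge_subset_iff, biEdge_subset_union_iff, hlt.ne']
      using Eq.symm
  · refine ⟨p, (mem_filter_univ _).mpr hp, hpq, ?_⟩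
    simp [e, card_biEdge_sdiff, heq, hlt.ne']

theorem edgeSets_eq_biEdges (G : SimpleGraph (α ⊕ β)) [DecidableRel G.Adj]
    (hbip : ∀ a b : α ⊕ β, G.Adj a b →
      (a.isLeft = true ∧ b.isRight = true) ∨ (a.isRight = true ∧ b.isLeft = true)) :
    edgeSets G = biEdges fun a b => G.Adj (.inl a) (.inr b) := by
  ext S
  simp only [edgeSets, biEdges, mem_image, mem_filter_univ, Prod.exists]
  constructor
  · rintro ⟨e, he, rfl⟩
    induction e using Sym2.ind with
    | _ u v =>
      rw [SimpleGraph.mem_edgeFinset, SimpleGraph.mem_edgeSet] at he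
      rcases hbip u v he with ⟨hu, hv⟩ | ⟨hu, hv⟩
      · obtain ⟨a, rfl⟩ := Sum.isLeft_iff.mp hu
        obtain ⟨b, rfl⟩ := Sum.isRight_iff.mp hv
        exact ⟨a, b, he, rfl⟩
      · obtain ⟨b, rfl⟩ := Sum.isRight_iff.mp hu
        obtain ⟨a, rfl⟩ := Sum.isLeft_iff.mp hv
        exact ⟨a, b, he.symm, pair_comm _ _⟩
  · rintro ⟨a, b, hab, rfl⟩
    exact ⟨s(.inl a, .inr b), SimpleGraph.mem_edgeFinset.mpr hab, rfl⟩

end BiEdges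

theorem stmt19_general (m n : ℕ) (G : SimpleGraph (Fin m ⊕ Fin n)) [DecidableRel G.Adj]
    (hbip : ∀ a b : Fin m ⊕ Fin n, G.Adj a b →
      (a.isLeft = true ∧ b.isRight = true) ∨ (a.isRight = true ∧ b.isLeft = true)) :
    StronglyShellable (edgeSets G) ↔
      ∃ (σ : Equiv.Perm (Fin m)) (τ : Equiv.Perm (Fin n)),
        ∀ (i r : Fin m) (j s : Fin n), G.Adj (.inl (σ i)) (.inr (τ j)) →
          r ≤ i → s ≤ j → G.Adj (.inl (σ r)) (.inr (τ s)) := by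
  rw [edgeSets_eq_biEdges G hbip]
  exact ⟨fun h => (IsFerrersRel.of_stronglyShellable h).exists_perm,
    fun ⟨σ, τ, hF⟩ => stronglyShellable_biEdges σ τ hF⟩

/-- A bipartite graph with parts X = Fin m, Y = Fin n and no isolated vertices is edgewise
strongly shellable iff, after suitable reorderings of the two parts, it is a Ferrers graph. -/
theorem stmt19 (m n : ℕ) (G : SimpleGraph (Fin m ⊕ Fin n)) [DecidableRel G.Adj]
    (hbip : ∀ a b : Fin m ⊕ Fin n, G.Adj a b →
      (a.isLeft = true ∧ b.isRight = true) ∨ (a.isRight = true ∧ b.isLeft = true))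
    (hnoiso : ∀ v : Fin m ⊕ Fin n, ∃ u, G.Adj v u) :
    StronglyShellable (edgeSets G) ↔
      ∃ (σ : Equiv.Perm (Fin m)) (τ : Equiv.Perm (Fin n)),
        ∀ (i r : Fin m) (j s : Fin n), G.Adj (.inl (σ i)) (.inr (τ j)) →
          r ≤ i → s ≤ j → G.Adj (.inl (σ r)) (.inr (τ s)) :=
  stmt19_general m n G hbip
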